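/- The coinductive fixpoint (accepting all run-trees) and the inductive fixpoint (accepting only run-trees with no infinite branch) of the relation g = {(([],[a]),a), (([x],[a]),a)} : §X ⊗ §A → A with A = {a}, X = {x} differ: the inductive fixpoint is the empty relation, while the coinductive fixpoint contains the pair ([x,x,…], a), where [x,x,…] is the multiset containing x with multiplicity ∞. -/

import Mathlib

open Classical

/-- `§A`: finite-or-countable multisets over `A`. -/
def SMul' (A : Type) := {m : A → ℕ∞ // Set.Countable {a | m a ≠ 0}}

/-- A (possibly infinite, countably-branching) tree of nodes labelled in `X ⊎ A`. -/
structure PreTree (X A : Type) where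
  dom : Set (List ℕ)
  label : List ℕ → X ⊕ A

/-- A node is a leaf when it has no children. -/
def PreTree.isLeaf {X A : Type} (t : PreTree X A) (u : List ℕ) : Prop :=
  u ∈ t.dom ∧ ∀ n : ℕ, u ++ [n] ∉ t.dom

/-- The multiset of `X`-labels among the children of `u`. -/
noncomputable def PreTree.countX {X A : Type} (t : PreTree X A) (u : List ℕ) (x : X) : ℕ∞ :=
  ⨆ s : Finset ℕ,
    ((s.filter fun n => u ++ [n] ∈ t.dom ∧ t.label (u ++ [n]) = Sum.inl x).card : ℕ∞)

/-- The multiset of `A`-labels among the children of `u`. -/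
noncomputable def PreTree.countA {X A : Type} (t : PreTree X A) (u : List ℕ) (c : A) : ℕ∞ :=
  ⨆ s : Finset ℕ,
    ((s.filter fun n => u ++ [n] ∈ t.dom ∧ t.label (u ++ [n]) = Sum.inr c).card : ℕ∞)

/-- `t` is a run-tree of the relation `f : §X ⊗ §A ⊸ A` rooted at `a`. -/
def isRunTree {X A : Type} (f : Set ((SMul' X × SMul' A) × A)) (a : A)
    (t : PreTree X A) : Prop :=
  [] ∈ t.dom ∧ t.label [] = Sum.inr a ∧
  (∀ (u : List ℕ) (n : ℕ), u ++ [n] ∈ t.dom → u ∈ t.dom) ∧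
  (∀ u ∈ t.dom, ∀ x, t.label u = Sum.inl x → t.isLeaf u) ∧
  (∀ u ∈ t.dom, ∀ b, t.label u = Sum.inr b →
    ∃ (hX : Set.Countable {x | t.countX u x ≠ 0})
      (hA : Set.Countable {c | t.countA u c ≠ 0}),
      ((⟨t.countX u, hX⟩, ⟨t.countA u, hA⟩), b) ∈ f)

/-- The multiset of `X`-labels at the leaves of `t`. -/
noncomputable def leafCountX {X A : Type} (t : PreTree X A) (x : X) : ℕ∞ :=
  ⨆ s : Finset (List ℕ),
    ((s.filter fun u => t.isLeaf u ∧ t.label u = Sum.inl x).card : ℕ∞)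

/-- `t` has no infinite branch. -/
def noInfiniteBranch {X A : Type} (t : PreTree X A) : Prop :=
  ¬ ∃ b : ℕ → ℕ, ∀ n : ℕ, ((List.range n).map b) ∈ t.dom

/-- The inductive fixpoint: only run-trees with no infinite branch are accepted. -/
def Yind {X A : Type} (f : Set ((SMul' X × SMul' A) × A)) : Set (SMul' X × A) :=
  {p | ∃ t : PreTree X A, isRunTree f p.2 t ∧ noInfiniteBranch t ∧
        ∀ x, p.1.val x = leafCountX t x}

/-- The coinductive fixpoint: all run-trees are accepted. -/
def Ycoind {X A : Type} (f : Set ((SMul' X × SMul' A) × A)) : Set (SMul' X × A) :=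
  {p | ∃ t : PreTree X A, isRunTree f p.2 t ∧ ∀ x, p.1.val x = leafCountX t x}

/-- The empty multiset over `Unit`. -/
def zeroM : SMul' Unit := ⟨fun _ => 0, Set.to_countable _⟩

/-- The singleton multiset over `Unit`. -/
def oneM : SMul' Unit := ⟨fun _ => 1, Set.to_countable _⟩

/-- The multiset `[x,x,…]` containing `x` with multiplicity `∞`. -/
def topM : SMul' Unit := ⟨fun _ => ⊤, Set.to_countable _⟩

/-- The relation `g = {(([],[a]),a), (([x],[a]),a)} : §X ⊗ §A → A` with `A = {a}`,
`X = {x}` (both represented by `Unit`). -/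
def gEx : Set ((SMul' Unit × SMul' Unit) × Unit) :=
  {((zeroM, oneM), ()), ((oneM, oneM), ())}

/-!
Every pair of `g` has a nonempty `A`-part, so every `A`-node of a run-tree has an `A`-child;
choosing such children from the root gives an infinite branch, hence no run-tree is
well-founded and the inductive fixpoint is empty. On the other hand the comb, an infinite
spine of `a`-nodes each carrying one `x`-leaf, is a run-tree of `g` with infinitely many leaves.
-/

open Set

lemma iSup_card_filter_eq_encard {I : Type} (P : I → Prop) [DecidablePred P] :
    (⨆ s : Finset I, ((s.filter P).card : ℕ∞)) = {i | P i}.encard := by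
  refine le_antisymm (iSup_le fun s => ?_) ?_
  · rw [← encard_coe_eq_coe_finsetCard]
    exact encard_le_encard fun i hi => (Finset.mem_filter.mp hi).2
  · rcases {i | P i}.finite_or_infinite with hfin | hinf
    · calc {i | P i}.encard = (hfin.toFinset.card : ℕ∞) := hfin.encard_eq_coe_toFinset_card
        _ = ((hfin.toFinset.filter P).card : ℕ∞) := by
          rw [Finset.filter_true_of_mem (p := P) fun i hi => hfin.mem_toFinset.mp hi]
        _ ≤ _ := le_iSup (fun s : Finset I => ((s.filter P).card : ℕ∞)) _
    · rw [hinf.encard_eq, ← ENat.iSup_natCast]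
      refine iSup_le fun n => ?_
      obtain ⟨s, hs, rfl⟩ := hinf.exists_subset_card_eq n
      calc (s.card : ℕ∞) = ((s.filter P).card : ℕ∞) := by
            rw [Finset.filter_true_of_mem (p := P) hs]
        _ ≤ _ := le_iSup (fun s : Finset I => ((s.filter P).card : ℕ∞)) _

namespace PreTree

variable {X A : Type} (t : PreTree X A)

lemma countX_eq_encard (u : List ℕ) (x : X) :
    t.countX u x = {n | u ++ [n] ∈ t.dom ∧ t.label (u ++ [n]) = .inl x}.encard :=
  iSup_card_filter_eq_encard _

lemma countA_eq_encard (u : List ℕ) (c : A) :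
    t.countA u c = {n | u ++ [n] ∈ t.dom ∧ t.label (u ++ [n]) = .inr c}.encard :=
  iSup_card_filter_eq_encard _

end PreTree

lemma leafCountX_eq_encard {X A : Type} (t : PreTree X A) (x : X) :
    leafCountX t x = {u | t.isLeaf u ∧ t.label u = .inl x}.encard :=
  iSup_card_filter_eq_encard _

lemma exists_branch_of_forall_exists_append {P : List ℕ → Prop} (h0 : P [])
    (hstep : ∀ u, P u → ∃ n, P (u ++ [n])) :
    ∃ b : ℕ → ℕ, ∀ n, P ((List.range n).map b) := by
  choose! child hchild using hstep
  let path : ℕ → List ℕ := fun n => Nat.rec [] (fun _ u => u ++ [child u]) n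
  have hmap : ∀ n, (List.range n).map (fun k => child (path k)) = path n := by
    intro n
    induction n with
    | zero => rfl
    | succ n ih => rw [List.range_succ, List.map_append, ih]; rfl
  refine ⟨fun k => child (path k), fun n => ?_⟩
  rw [hmap]
  induction n with
  | zero => exact h0
  | succ n ih => exact hchild _ ih

lemma isRunTree.not_noInfiniteBranch {X A : Type} {f : Set ((SMul' X × SMul' A) × A)} {a : A}
    {t : PreTree X A} (hf : ∀ p ∈ f, ∃ c, p.1.2.val c ≠ 0) (ht : isRunTree f a t) :
    ¬ noInfiniteBranch t := by
  obtain ⟨hroot, hlabel, -, -, hnode⟩ := ht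
  have hstep : ∀ u, (u ∈ t.dom ∧ ∃ c, t.label u = .inr c) →
      ∃ n, u ++ [n] ∈ t.dom ∧ ∃ c, t.label (u ++ [n]) = .inr c := by
    rintro u ⟨hu, b, hb⟩
    obtain ⟨hX, hA, hmem⟩ := hnode u hu b hb
    obtain ⟨c, hc⟩ : ∃ c, t.countA u c ≠ 0 := hf _ hmem
    obtain ⟨n, hn, hlab⟩ := encard_ne_zero.mp (t.countA_eq_encard u c ▸ hc)
    exact ⟨n, hn, c, hlab⟩
  obtain ⟨b, hb⟩ := exists_branch_of_forall_exists_append ⟨hroot, a, hlabel⟩ hstep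
  exact not_not.mpr ⟨b, fun n => (hb n).1⟩

lemma Yind_eq_empty_of_forall_ne_zero {X A : Type} {f : Set ((SMul' X × SMul' A) × A)}
    (hf : ∀ p ∈ f, ∃ c, p.1.2.val c ≠ 0) : Yind f = ∅ :=
  eq_empty_of_forall_notMem fun _ ⟨_, ht, hfin, _⟩ => ht.not_noInfiniteBranch hf hfin

noncomputable def SMul'.single {X : Type} (x : X) : SMul' X :=
  ⟨Pi.single x 1, (countable_singleton x).mono Pi.support_single_subset⟩

section Comb

open List

variable {X A : Type} (x : X) (a : A)

def comb : PreTree X A where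
  dom := {u | ∃ n, u = replicate n 0 ∨ u = replicate n 0 ++ [1]}
  label u := if 1 ∈ u then .inl x else .inr a

variable {x a}

lemma comb_label_replicate (n : ℕ) : (comb x a).label (replicate n 0) = .inr a :=
  if_neg (by simp [mem_replicate])

lemma comb_label_tooth (n : ℕ) : (comb x a).label (replicate n 0 ++ [1]) = .inl x :=
  if_pos (by simp)

lemma exists_eq_replicate_of_append_mem_comb {u : List ℕ} {k : ℕ}
    (h : u ++ [k] ∈ (comb x a).dom) : ∃ n, u = replicate n 0 := by
  obtain ⟨n, hn | hn⟩ := h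
  · exact ⟨u.length,
      eq_replicate_of_mem fun i hi => eq_of_mem_replicate (hn ▸ mem_append_left _ hi)⟩
  · exact ⟨n, (append_inj' hn rfl).1⟩

lemma replicate_append_mem_comb_iff (n k : ℕ) :
    replicate n 0 ++ [k] ∈ (comb x a).dom ↔ k = 0 ∨ k = 1 := by
  constructor
  · rintro ⟨m, hm | hm⟩
    · exact Or.inl (eq_of_mem_replicate (hm ▸ mem_append_right _ (mem_singleton_self k)))
    · exact Or.inr (by simpa using (append_inj' hm rfl).2)
  · rintro (rfl | rfl)
    · exact ⟨n + 1, Or.inl (replicate_succ' ..).symm⟩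
    · exact ⟨n, Or.inr rfl⟩


lemma replicate_append_mem_comb_and_label_eq_iff (n k : ℕ) (l : X ⊕ A) :
    replicate n 0 ++ [k] ∈ (comb x a).dom ∧ (comb x a).label (replicate n 0 ++ [k]) = l ↔
      k = 0 ∧ l = .inr a ∨ k = 1 ∧ l = .inl x := by
  rw [replicate_append_mem_comb_iff]
  have h0 : (comb x a).label (replicate n 0 ++ [0]) = .inr a := by
    rw [← replicate_succ', comb_label_replicate]
  constructor
  · rintro ⟨rfl | rfl, rfl⟩
    · exact Or.inl ⟨rfl, h0⟩
    · exact Or.inr ⟨rfl, comb_label_tooth n⟩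
  · rintro (⟨rfl, rfl⟩ | ⟨rfl, rfl⟩)
    · exact ⟨Or.inl rfl, h0⟩
    · exact ⟨Or.inr rfl, comb_label_tooth n⟩

lemma comb_countX_replicate (n : ℕ) :
    (comb x a).countX (replicate n 0) = (SMul'.single x).val := by
  funext y
  rw [PreTree.countX_eq_encard]
  simp only [replicate_append_mem_comb_and_label_eq_iff]
  by_cases h : y = x
  · subst h; simp [SMul'.single]
  · simp [SMul'.single, h]

lemma comb_countA_replicate (n : ℕ) :
    (comb x a).countA (replicate n 0) = (SMul'.single a).val := by
  funext c
  rw [PreTree.countA_eq_encard]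
  simp only [replicate_append_mem_comb_and_label_eq_iff]
  by_cases h : c = a
  · subst h; simp [SMul'.single]
  · simp [SMul'.single, h]

lemma comb_isLeaf_tooth (n : ℕ) : (comb x a).isLeaf (replicate n 0 ++ [1]) := by
  refine ⟨⟨n, Or.inr rfl⟩, fun k hk => ?_⟩
  obtain ⟨m, hm⟩ := exists_eq_replicate_of_append_mem_comb hk
  simpa using congrArg (1 ∈ ·) hm

lemma isRunTree_comb {f : Set ((SMul' X × SMul' A) × A)}
    (hf : ((SMul'.single x, SMul'.single a), a) ∈ f) : isRunTree f a (comb x a) := by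
  refine ⟨⟨0, Or.inl rfl⟩, comb_label_replicate 0, ?_, ?_, ?_⟩
  · intro u k h
    obtain ⟨n, rfl⟩ := exists_eq_replicate_of_append_mem_comb h
    exact ⟨n, Or.inl rfl⟩
  · rintro u ⟨n, rfl | rfl⟩ y hy
    · rw [comb_label_replicate] at hy; cases hy
    · exact comb_isLeaf_tooth n
  · rintro u ⟨n, rfl | rfl⟩ b hb
    · rw [comb_label_replicate] at hb
      cases hb
      refine ⟨comb_countX_replicate n ▸ (SMul'.single x).2,
        comb_countA_replicate n ▸ (SMul'.single a).2, ?_⟩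
      convert hf using 2
      exact Prod.ext (Subtype.ext (comb_countX_replicate n))
        (Subtype.ext (comb_countA_replicate n))
    · rw [comb_label_tooth] at hb; cases hb

lemma leafCountX_comb : leafCountX (comb x a) x = ⊤ := by
  rw [leafCountX_eq_encard, encard_eq_top_iff]
  refine infinite_of_injective_forall_mem (f := fun n => replicate n 0 ++ [1])
    (fun m n h => by simpa using congrArg length h)
    fun n => ⟨comb_isLeaf_tooth n, comb_label_tooth n⟩

end Comb

/-- the inductive and coinductive fixpoints of `g` differ: the
inductive fixpoint is the empty relation, while the coinductive fixpoint contains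
the pair `([x,x,…], a)`. -/
theorem inductive_coinductive_differ :
    Yind gEx = ∅ ∧ (topM, ()) ∈ Ycoind gEx := by
  have hone : oneM = SMul'.single () :=
    Subtype.ext (funext fun _ => by simp [oneM, SMul'.single])
  refine ⟨Yind_eq_empty_of_forall_ne_zero ?_, comb () (), isRunTree_comb ?_,
    fun _ => leafCountX_comb.symm⟩
  · rintro _ (rfl | rfl) <;> exact ⟨(), one_ne_zero⟩
  · rw [← hone]
    exact Or.inr rfl
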